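/- Under the hypotheses of the previous symmetry result, every eigenvalue λ of the linear map S satisfies λ ≤ -inf_{z∈(-1,1)} R(z). In particular all eigenvalues of S are real. -/

import Mathlib

/-!
For the weight `f`, the operator `L P = ½ a P'' + b P' - R P` is symmetric on polynomials with
respect to `⟨P, Q⟩ = ∫₋₁¹ P Q f`: since `b f = ½ (a f)'`, the function `2 (L P · Q - P · L Q) f`
is the derivative of `a f (P' Q - P Q')`, whose integral vanishes because `a f → 0` at `±1`.
Integrating `(a f P P')'` in the same way gives
`⟨L P, P⟩ = -∫ (½ a P'² + R P²) f ≤ -(inf R) ⟨P, P⟩`.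
For a complex eigenvector `x + i y` of the real matrix of `S`, symmetry forces
`Im μ · (⟨x, x⟩ + ⟨y, y⟩) = 0`, and then the second inequality bounds `Re μ`.
-/

open MeasureTheory Filter Topology
open Matrix Polynomial Set

theorem Matrix.exists_mulVec_eq_smul_of_isRoot_charpoly_map {ι : Type*} [Fintype ι]
    [DecidableEq ι] {A : Matrix ι ι ℝ} {μ : ℂ} (hμ : (A.charpoly.map (algebraMap ℝ ℂ)).IsRoot μ) :
    ∃ v : ι → ℂ, v ≠ 0 ∧ A.map (algebraMap ℝ ℂ) *ᵥ v = μ • v := by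
  rw [← charpoly_map, ← charpoly_toLin', ← Module.End.hasEigenvalue_iff_isRoot_charpoly] at hμ
  obtain ⟨v, hv, hv0⟩ := hμ.exists_hasEigenvector
  exact ⟨v, hv0, by simpa [Module.End.mem_eigenspace_iff] using hv⟩

theorem Matrix.mulVec_re_im_of_map_mulVec_eq_smul {ι : Type*} [Fintype ι]
    {A : Matrix ι ι ℝ} {μ : ℂ} {v : ι → ℂ} (hv : A.map (algebraMap ℝ ℂ) *ᵥ v = μ • v) :
    A *ᵥ (fun i => (v i).re) = μ.re • (fun i => (v i).re) - μ.im • (fun i => (v i).im) ∧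
      A *ᵥ (fun i => (v i).im) = μ.im • (fun i => (v i).re) + μ.re • (fun i => (v i).im) := by
  constructor <;> funext i <;> have h := congrFun hv i
  · simpa [mulVec, dotProduct, Complex.re_sum] using congrArg Complex.re h
  · simpa [mulVec, dotProduct, Complex.im_sum, add_comm] using congrArg Complex.im h

theorem LinearMap.IsAdjointPair.im_eq_zero_and_re_le_of_isRoot_charpoly {ι : Type*} [Fintype ι]
    [DecidableEq ι] {B : LinearMap.BilinForm ℝ (ι → ℝ)}
    (hB_pos : ∀ x ≠ 0, 0 < B x x) {S : Module.End ℝ (ι → ℝ)} (hS : B.IsAdjointPair B S S)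
    {c : ℝ} (hc : ∀ x, B (S x) x ≤ c * B x x) {μ : ℂ}
    (hμ : ((LinearMap.toMatrix' S).charpoly.map (algebraMap ℝ ℂ)).IsRoot μ) :
    μ.im = 0 ∧ μ.re ≤ c := by
  obtain ⟨v, hv0, hv⟩ := Matrix.exists_mulVec_eq_smul_of_isRoot_charpoly_map hμ
  set x : ι → ℝ := fun i => (v i).re
  set y : ι → ℝ := fun i => (v i).im
  obtain ⟨hSx, hSy⟩ := Matrix.mulVec_re_im_of_map_mulVec_eq_smul hv
  rw [LinearMap.toMatrix'_mulVec] at hSx hSy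
  have hB_nonneg : ∀ w, 0 ≤ B w w := fun w => by
    rcases eq_or_ne w 0 with rfl | hw
    · simp
    · exact (hB_pos w hw).le
  have hnorm : 0 < B x x + B y y := by
    have : x ≠ 0 ∨ y ≠ 0 := by
      by_contra! h
      exact hv0 (funext fun i => Complex.ext (congrFun h.1 i) (congrFun h.2 i))
    rcases this with hx | hy
    · linarith [hB_pos x hx, hB_nonneg y]
    · linarith [hB_pos y hy, hB_nonneg x]
  have him : μ.im = 0 := by
    have h := hS x y
    rw [hSx, hSy] at h
    simp only [map_sub, map_add, map_smul, LinearMap.sub_apply, LinearMap.smul_apply,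
      smul_eq_mul] at h
    have : μ.im * (B x x + B y y) = 0 := by linarith
    exact (mul_eq_zero.1 this).resolve_right hnorm.ne'
  refine ⟨him, ?_⟩
  have hre : B (S x) x + B (S y) y = μ.re * (B x x + B y y) := by
    rw [hSx, hSy, him]
    simp only [map_sub, map_add, map_smul, LinearMap.sub_apply, LinearMap.add_apply,
      LinearMap.smul_apply, smul_eq_mul]
    ring
  exact le_of_mul_le_mul_right (by linarith [hc x, hc y]) hnorm

theorem Polynomial.iteratedDeriv_eval (P : ℝ[X]) (k : ℕ) :
    iteratedDeriv k (fun z => P.eval z) = fun z => (derivative^[k] P).eval z := by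
  induction k with
  | zero => simp
  | succ k ih =>
    ext z
    rw [iteratedDeriv_succ, ih, Function.iterate_succ_apply']
    exact Polynomial.deriv _

theorem Polynomial.eval_ofFn (n : ℕ) (p : Fin n → ℝ) (z : ℝ) :
    (ofFn n p).eval z = ∑ k : Fin n, p k * z ^ (k : ℕ) := by
  simp [ofFn_eq_sum_monomial, eval_finsetSum]

theorem integrableOn_Ioo_mul_of_continuousOn {f g : ℝ → ℝ}
    (hf : IntegrableOn f (Ioo (-1) 1)) (hg : ContinuousOn g (Icc (-1) 1)) :
    IntegrableOn (fun z => g z * f z) (Ioo (-1) 1) :=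
  hf.continuousOn_mul_of_subset hg isCompact_Icc measurableSet_Ioo Ioo_subset_Icc_self

noncomputable def weightedForm {f : ℝ → ℝ} (hf : IntegrableOn f (Ioo (-1) 1)) :
    LinearMap.BilinForm ℝ ℝ[X] :=
  LinearMap.mk₂ ℝ (fun P Q => ∫ z in Ioo (-1 : ℝ) 1, P.eval z * Q.eval z * f z)
    (fun P P' Q => by
      simp only [eval_add, add_mul]
      exact integral_add (integrableOn_Ioo_mul_of_continuousOn hf (by fun_prop))
        (integrableOn_Ioo_mul_of_continuousOn hf (by fun_prop)))
    (fun c P Q => by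
      simp only [eval_smul, smul_eq_mul, mul_assoc, integral_const_mul])
    (fun P Q Q' => by
      simp only [eval_add, mul_add, add_mul]
      exact integral_add (integrableOn_Ioo_mul_of_continuousOn hf (by fun_prop))
        (integrableOn_Ioo_mul_of_continuousOn hf (by fun_prop)))
    (fun c P Q => by
      simp only [eval_smul, smul_eq_mul, mul_left_comm _ c, mul_assoc, integral_const_mul])

theorem weightedForm_apply {f : ℝ → ℝ} (hf : IntegrableOn f (Ioo (-1) 1)) (P Q : ℝ[X]) :
    weightedForm hf P Q = ∫ z in Ioo (-1 : ℝ) 1, P.eval z * Q.eval z * f z :=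
  rfl

theorem weightedForm_self_pos {f : ℝ → ℝ} (hf_pos : ∀ z ∈ Ioo (-1 : ℝ) 1, 0 < f z)
    (hf : IntegrableOn f (Ioo (-1) 1)) {P : ℝ[X]} (hP : P ≠ 0) :
    0 < weightedForm hf P P := by
  rw [weightedForm_apply]
  have hnonneg : ∀ z ∈ Ioo (-1 : ℝ) 1, 0 ≤ P.eval z * P.eval z * f z := fun z hz =>
    mul_nonneg (mul_self_nonneg _) (hf_pos z hz).le
  rw [setIntegral_pos_iff_support_of_nonneg_ae
    (ae_restrict_of_forall_mem measurableSet_Ioo hnonneg)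
    (integrableOn_Ioo_mul_of_continuousOn hf (by fun_prop))]
  have hsub : Ioo (-1 : ℝ) 1 \ {z | P.IsRoot z} ⊆
      Function.support (fun z => P.eval z * P.eval z * f z) ∩ Ioo (-1) 1 := fun z ⟨hz, hroot⟩ =>
    ⟨by simpa [Function.mem_support, (hf_pos z hz).ne'] using hroot, hz⟩
  calc (0 : ENNReal) < volume (Ioo (-1 : ℝ) 1 \ {z | P.IsRoot z}) := by
        rw [measure_sdiff_null ((finite_setOfPred_isRoot hP).measure_zero _), Real.volume_Ioo]
        norm_num
    _ ≤ _ := measure_mono hsub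

noncomputable def generator (a b R : ℝ → ℝ) (P : ℝ[X]) (z : ℝ) : ℝ :=
  1 / 2 * a z * P.derivative.derivative.eval z + b z * P.derivative.eval z - R z * P.eval z

theorem eval_ofFn_apply_eq_generator {n : ℕ} {a b R : ℝ → ℝ}
    {S : (Fin n → ℝ) →ₗ[ℝ] (Fin n → ℝ)}
    (hS : ∀ p : Fin n → ℝ, ∀ z ∈ Ioo (-1 : ℝ) 1,
      (∑ k : Fin n, S p k * z ^ (k : ℕ)) =
        1 / 2 * a z * iteratedDeriv 2 (fun z => ∑ k : Fin n, p k * z ^ (k : ℕ)) z +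
          b z * deriv (fun z => ∑ k : Fin n, p k * z ^ (k : ℕ)) z -
          R z * ∑ k : Fin n, p k * z ^ (k : ℕ))
    (p : Fin n → ℝ) : ∀ z ∈ Ioo (-1 : ℝ) 1,
      (ofFn n (S p)).eval z = generator a b R (ofFn n p) z := by
  intro z hz
  have h := hS p z hz
  simp only [← eval_ofFn, iteratedDeriv_eval, Polynomial.deriv] at h
  simpa [generator] using h

/-- `f` is a stationary density of the diffusion `½ a ∂² + b ∂` on `(-1, 1)`: the stationary
Fokker–Planck equation in zero-flux form `½ (a f)' = b f`, with `a f` vanishing at both ends. -/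
structure IsZeroFluxStationary (a b f : ℝ → ℝ) : Prop where
  differentiableOn : DifferentiableOn ℝ (fun z => a z * f z) (Ioo (-1) 1)
  drift_mul_eq : ∀ z ∈ Ioo (-1 : ℝ) 1, b z * f z = 1 / 2 * deriv (fun z => a z * f z) z
  tendsto_nhdsGT : Tendsto (fun z => a z * f z) (𝓝[>] (-1)) (𝓝 0)
  tendsto_nhdsLT : Tendsto (fun z => a z * f z) (𝓝[<] 1) (𝓝 0)

namespace IsZeroFluxStationary

variable {a b f : ℝ → ℝ}

theorem hasDerivAt_mul_eval (h : IsZeroFluxStationary a b f) (u : ℝ[X]) {z : ℝ}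
    (hz : z ∈ Ioo (-1 : ℝ) 1) :
    HasDerivAt (fun z => a z * f z * u.eval z)
      (2 * b z * f z * u.eval z + a z * f z * u.derivative.eval z) z := by
  have haf : HasDerivAt (fun z => a z * f z) (2 * b z * f z) z := by
    have hd := ((h.differentiableOn z hz).differentiableAt (Ioo_mem_nhds hz.1 hz.2)).hasDerivAt
    rwa [mul_assoc, h.drift_mul_eq z hz, ← mul_assoc, show (2 : ℝ) * (1 / 2) = 1 by norm_num,
      one_mul]
  exact haf.mul (u.hasDerivAt z)

theorem setIntegral_eq_zero (h : IsZeroFluxStationary a b f) (u : ℝ[X]) {g : ℝ → ℝ}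
    (hg : IntegrableOn g (Ioo (-1) 1))
    (hg_eq : ∀ z ∈ Ioo (-1 : ℝ) 1,
      g z = 2 * b z * f z * u.eval z + a z * f z * u.derivative.eval z) :
    ∫ z in Ioo (-1 : ℝ) 1, g z = 0 := by
  have hu_lim : ∀ {l : Filter ℝ} {z₀ : ℝ}, l ≤ 𝓝 z₀ →
      Tendsto (fun z => a z * f z) l (𝓝 0) → Tendsto (fun z => a z * f z * u.eval z) l (𝓝 0) :=
    fun hl hlim => by simpa using hlim.mul ((u.continuous.tendsto _).mono_left hl)
  have hftc := intervalIntegral.integral_eq_sub_of_hasDerivAt_of_tendsto (by norm_num)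
    (fun z hz => hg_eq z hz ▸ h.hasDerivAt_mul_eval u hz)
    ((intervalIntegrable_iff_integrableOn_Ioo_of_le (by norm_num)).2 hg)
    (hu_lim nhdsWithin_le_nhds h.tendsto_nhdsGT) (hu_lim nhdsWithin_le_nhds h.tendsto_nhdsLT)
  rwa [intervalIntegral.integral_of_le (by norm_num), integral_Ioc_eq_integral_Ioo,
    sub_zero] at hftc

theorem weightedForm_generator_symm (h : IsZeroFluxStationary a b f)
    (hf : IntegrableOn f (Ioo (-1) 1)) {R : ℝ → ℝ} {P Q LP LQ : ℝ[X]}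
    (hP : ∀ z ∈ Ioo (-1 : ℝ) 1, LP.eval z = generator a b R P z)
    (hQ : ∀ z ∈ Ioo (-1 : ℝ) 1, LQ.eval z = generator a b R Q z) :
    weightedForm hf LP Q = weightedForm hf P LQ := by
  have hLP : IntegrableOn (fun z => LP.eval z * Q.eval z * f z) (Ioo (-1) 1) :=
    integrableOn_Ioo_mul_of_continuousOn hf (by fun_prop)
  have hLQ : IntegrableOn (fun z => P.eval z * LQ.eval z * f z) (Ioo (-1) 1) :=
    integrableOn_Ioo_mul_of_continuousOn hf (by fun_prop)
  have h0 := h.setIntegral_eq_zero (P.derivative * Q - P * Q.derivative)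
    ((hLP.sub hLQ).const_mul 2) fun z hz => by
      simp only [Pi.sub_apply, derivative_sub, derivative_mul, eval_sub, eval_add, eval_mul,
        hP z hz, hQ z hz, generator]
      ring
  rw [integral_const_mul, integral_sub' hLP hLQ] at h0
  rw [weightedForm_apply, weightedForm_apply]
  linarith

theorem weightedForm_generator_self_le (h : IsZeroFluxStationary a b f)
    (hf : IntegrableOn f (Ioo (-1) 1)) (hf_nonneg : ∀ z ∈ Ioo (-1 : ℝ) 1, 0 ≤ f z)
    (ha : ContinuousOn a (Icc (-1) 1)) (ha_nonneg : ∀ z ∈ Ioo (-1 : ℝ) 1, 0 ≤ a z)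
    {R : ℝ → ℝ} (hR : ContinuousOn R (Icc (-1) 1)) {m : ℝ} (hm : ∀ z ∈ Ioo (-1 : ℝ) 1, m ≤ R z)
    {P LP : ℝ[X]} (hP : ∀ z ∈ Ioo (-1 : ℝ) 1, LP.eval z = generator a b R P z) :
    weightedForm hf LP P ≤ -m * weightedForm hf P P := by
  have h0 := h.setIntegral_eq_zero (P * P.derivative)
    (g := fun z => (2 * LP.eval z * P.eval z + a z * P.derivative.eval z ^ 2
      + 2 * R z * P.eval z ^ 2) * f z)
    (integrableOn_Ioo_mul_of_continuousOn hf (by fun_prop)) fun z hz => by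
      simp only [derivative_mul, eval_mul, eval_add, hP z hz, generator]
      ring
  have hle : weightedForm hf ((2 : ℝ) • LP + (2 * m) • P) P ≤ 0 := by
    rw [weightedForm_apply, ← h0]
    refine setIntegral_mono_on (integrableOn_Ioo_mul_of_continuousOn hf (by fun_prop))
      (integrableOn_Ioo_mul_of_continuousOn hf (by fun_prop)) measurableSet_Ioo fun z hz => ?_
    have hRm : m * P.eval z ^ 2 ≤ R z * P.eval z ^ 2 :=
      mul_le_mul_of_nonneg_right (hm z hz) (sq_nonneg _)
    have hdiss : 0 ≤ a z * P.derivative.eval z ^ 2 := mul_nonneg (ha_nonneg z hz) (sq_nonneg _)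
    simp only [eval_add, eval_smul, smul_eq_mul]
    gcongr ?_ * f z
    · exact hf_nonneg z hz
    · nlinarith
  simp only [map_add, map_smul, LinearMap.add_apply, LinearMap.smul_apply, smul_eq_mul] at hle
  linarith

end IsZeroFluxStationary

/-- Under the hypotheses of the symmetry result, every eigenvalue `μ` of the
generator matrix `S` (root of its characteristic polynomial over `ℂ`) is real
and satisfies `μ ≤ -inf_{z ∈ (-1,1)} R(z)`. -/
theorem generator_eigenvalues_real_and_bounded
    (n : ℕ) (c₀ c₁ c₂ : ℝ)
    (b R f : ℝ → ℝ)
    (hf_pos : ∀ z ∈ Set.Ioo (-1 : ℝ) 1, 0 < f z)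
    (hf_int : IntegrableOn f (Set.Ioo (-1 : ℝ) 1))
    (ha_pos : ∀ z ∈ Set.Ioo (-1 : ℝ) 1,
      0 < (1 - z ^ 2) * (c₀ + c₁ * z + c₂ * z ^ 2))
    (hR_cont : ContinuousOn R (Set.Icc (-1 : ℝ) 1))
    (haf_diff : DifferentiableOn ℝ
      (fun z => (1 - z ^ 2) * (c₀ + c₁ * z + c₂ * z ^ 2) * f z) (Set.Ioo (-1 : ℝ) 1))
    (hFP : ∀ z ∈ Set.Ioo (-1 : ℝ) 1,
      b z * f z =
        (1 / 2) * deriv (fun z => (1 - z ^ 2) * (c₀ + c₁ * z + c₂ * z ^ 2) * f z) z)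
    (hbcL : Tendsto (fun z => (1 - z ^ 2) * (c₀ + c₁ * z + c₂ * z ^ 2) * f z)
      (𝓝[>] (-1 : ℝ)) (𝓝 0))
    (hbcR : Tendsto (fun z => (1 - z ^ 2) * (c₀ + c₁ * z + c₂ * z ^ 2) * f z)
      (𝓝[<] (1 : ℝ)) (𝓝 0))
    (S : (Fin (n + 1) → ℝ) →ₗ[ℝ] (Fin (n + 1) → ℝ))
    (hS : ∀ p : Fin (n + 1) → ℝ, ∀ z ∈ Set.Ioo (-1 : ℝ) 1,
      (∑ k : Fin (n + 1), S p k * z ^ (k : ℕ)) =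
        (1 / 2) * ((1 - z ^ 2) * (c₀ + c₁ * z + c₂ * z ^ 2)) *
            iteratedDeriv 2 (fun z => ∑ k : Fin (n + 1), p k * z ^ (k : ℕ)) z +
          b z * deriv (fun z => ∑ k : Fin (n + 1), p k * z ^ (k : ℕ)) z -
          R z * ∑ k : Fin (n + 1), p k * z ^ (k : ℕ)) :
    ∀ μ : ℂ,
      ((LinearMap.toMatrix' S).charpoly.map (algebraMap ℝ ℂ)).IsRoot μ →
        μ.im = 0 ∧ μ.re ≤ -sInf (R '' Set.Ioo (-1 : ℝ) 1) := by
  intro μ hμ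
  set a : ℝ → ℝ := fun z => (1 - z ^ 2) * (c₀ + c₁ * z + c₂ * z ^ 2)
  have hstat : IsZeroFluxStationary a b f := ⟨haf_diff, hFP, hbcL, hbcR⟩
  have hgen (p : Fin (n + 1) → ℝ) :
      ∀ z ∈ Ioo (-1 : ℝ) 1, (ofFn (n + 1) (S p)).eval z = generator a b R (ofFn (n + 1) p) z :=
    eval_ofFn_apply_eq_generator hS p
  have hR_ge : ∀ z ∈ Ioo (-1 : ℝ) 1, sInf (R '' Ioo (-1 : ℝ) 1) ≤ R z := fun z hz =>
    csInf_le (((isCompact_Icc.image_of_continuousOn hR_cont).bddBelow).mono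
      (image_mono Ioo_subset_Icc_self)) (mem_image_of_mem R hz)
  refine LinearMap.IsAdjointPair.im_eq_zero_and_re_le_of_isRoot_charpoly
    (B := (weightedForm hf_int).compl₁₂ (ofFn (n + 1)) (ofFn (n + 1)))
    (fun p hp => weightedForm_self_pos hf_pos hf_int
      ((map_ne_zero_iff _ (injective_ofFn _)).2 hp))
    (fun p q => hstat.weightedForm_generator_symm hf_int (hgen p) (hgen q))
    (fun p => ?_) hμ
  simpa using hstat.weightedForm_generator_self_le hf_int (fun z hz => (hf_pos z hz).le)
    (by fun_prop) (fun z hz => (ha_pos z hz).le) hR_cont hR_ge (hgen p)
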